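/- arXiv:2105.11786 — 5 statements merged into one kernel-verified Lean document; each statement's English description precedes it below -/
import Mathlib

section
/- Let M be an FSM and V ⊆ Σ_I* a finite set of input traces containing the empty trace ε. Then either the set of states q0-after-V contains all reachable states of M (q0-after-V = q0-after-Σ_I*), or q0-after-(V ∪ V.Σ_I) contains at least one state not contained in q0-after-V, i.e., q0-after-V ⊊ q0-after-(V ∪ V.Σ_I). -/
/-! If extending `V` by one input never reaches a new state, then `q0-after-V` contains `q0` and
is closed under every transition, and such a set contains every reachable state. -/

def dAfter {Q I : Type*} (δ : Q → I → Q) : Q → List I → Q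
  | q, [] => q
  | q, x :: xs => dAfter δ (δ q x) xs

theorem dAfter_eq_foldl {Q I : Type*} (δ : Q → I → Q) (q : Q) (w : List I) :
    dAfter δ q w = w.foldl δ q := by
  induction w generalizing q with
  | nil => rfl
  | cons x xs ih => exact ih (δ q x)

theorem dAfter_append_singleton {Q I : Type*} (δ : Q → I → Q) (q : Q) (w : List I) (x : I) :
    dAfter δ q (w ++ [x]) = δ (dAfter δ q w) x := by
  simp only [dAfter_eq_foldl, List.foldl_append, List.foldl_cons, List.foldl_nil]

theorem dAfter_mem_of_forall_mem {Q I : Type*} (δ : Q → I → Q) {S : Set Q} {q : Q} (hq : q ∈ S)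
    (hS : ∀ p ∈ S, ∀ x, δ p x ∈ S) (w : List I) : dAfter δ q w ∈ S := by
  induction w generalizing q with
  | nil => exact hq
  | cons x xs ih => exact ih (hS q hq x)

theorem stmt_3_general {Q I : Type*} (δ : Q → I → Q) (q0 : Q)
    (V : Set (List I)) (hε : ([] : List I) ∈ V) :
    ((fun v => dAfter δ q0 v) '' V = Set.range fun v => dAfter δ q0 v) ∨
    ((fun v => dAfter δ q0 v) '' V ⊂
      (fun v => dAfter δ q0 v) '' (V ∪ {w | ∃ v ∈ V, ∃ x : I, w = v ++ [x]})) := by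
  by_cases hclosed : (fun v => dAfter δ q0 v) '' (V ∪ {w | ∃ v ∈ V, ∃ x : I, w = v ++ [x]}) ⊆
      (fun v => dAfter δ q0 v) '' V
  · left
    refine (Set.image_subset_range _ _).antisymm ?_
    rintro _ ⟨w, rfl⟩
    refine dAfter_mem_of_forall_mem δ (S := (fun v => dAfter δ q0 v) '' V) ⟨[], hε, rfl⟩ ?_ w
    rintro _ ⟨v, hv, rfl⟩ x
    exact hclosed ⟨v ++ [x], Or.inr ⟨v, hv, x, rfl⟩, dAfter_append_singleton δ q0 v x⟩
  · right
    exact (Set.image_mono Set.subset_union_left).ssubset_of_not_superset hclosed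

/-- for a finite set V of input traces containing ε, either q0-after-V contains
all reachable states, or q0-after-(V ∪ V.Σ_I) properly contains q0-after-V. -/
theorem stmt_3 {Q I : Type*} (δ : Q → I → Q) (q0 : Q)
    (V : Set (List I)) (hfin : V.Finite) (hε : ([] : List I) ∈ V) :
    ((fun v => dAfter δ q0 v) '' V = Set.range fun v => dAfter δ q0 v) ∨
    ((fun v => dAfter δ q0 v) '' V ⊂
      (fun v => dAfter δ q0 v) '' (V ∪ {w | ∃ v ∈ V, ∃ x : I, w = v ++ [x]})) :=
  stmt_3_general δ q0 V hε
end

section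
/- Let M and S be completely specified deterministic prime FSMs over the same input and output alphabets, with output functions ω_M and ω_S. Define the composite requirement R_eq as the conjunction over all (q,x) ∈ Q × Σ_I of the elementary requirements R(q, x, {ω_M(q,x)}). Then L(S) = L(M) if and only if S ⊨ R_eq. -/
def oOut {Q I O : Type*} (δ : Q → I → Q) (ω : Q → I → O) : Q → List I → List O
  | _, [] => []
  | q, x :: xs => ω q x :: oOut δ ω (δ q x) xs

theorem setOf_snd_eq_eq_setOf_snd_eq_iff {α β : Type*} {f g : α → β} :
    {p : α × β | p.2 = f p.1} = {p | p.2 = g p.1} ↔ f = g := by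
  refine ⟨fun h => funext fun a => ?_, fun h => h ▸ rfl⟩
  exact (h ▸ rfl : (a, f a) ∈ {p : α × β | p.2 = g p.1})

theorem oOut_append_singleton {Q I O : Type*} (δ : Q → I → Q) (ω : Q → I → O) (q : Q)
    (xs : List I) (x : I) :
    oOut δ ω q (xs ++ [x]) = oOut δ ω q xs ++ [ω (dAfter δ q xs) x] := by
  induction xs generalizing q with
  | nil => rfl
  | cons y xs ih => simp only [List.cons_append, oOut, dAfter, ih]

theorem oOut_eq_oOut_iff {Q S I O : Type*} {δM : Q → I → Q} {ωM : Q → I → O} {q : Q}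
    {δS : S → I → S} {ωS : S → I → O} {s : S} :
    (∀ xs, oOut δS ωS s xs = oOut δM ωM q xs) ↔
      ∀ π x, ωS (dAfter δS s π) x = ωM (dAfter δM q π) x := by
  constructor
  · intro h π x
    have hsnoc := h (π ++ [x])
    rw [oOut_append_singleton, oOut_append_singleton, List.append_singleton_inj] at hsnoc
    exact hsnoc.2
  · intro h xs
    induction xs using List.reverseRecOn with
    | nil => rfl
    | append_singleton xs x ih => rw [oOut_append_singleton, oOut_append_singleton, ih, h]

theorem stmt_6_general {Q S I O : Type*}
    (δM : Q → I → Q) (ωM : Q → I → O) (q0 : Q)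
    (δS : S → I → S) (ωS : S → I → O) (s0 : S) :
    {p : List I × List O | p.2 = oOut δS ωS s0 p.1} =
      {p : List I × List O | p.2 = oOut δM ωM q0 p.1} ↔
    ∀ (q : Q) (x : I) (π : List I), dAfter δM q0 π = q →
      ωS (dAfter δS s0 π) x ∈ ({ωM q x} : Set O) := by
  rw [setOf_snd_eq_eq_setOf_snd_eq_iff, funext_iff, oOut_eq_oOut_iff]
  simp only [Set.mem_singleton_iff, forall_comm (α := Q), forall_eq']
  exact forall_comm

/-- for completely specified deterministic prime machines M and S over the same
alphabets, L(S) = L(M) iff S satisfies the composite requirement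
R_eq = ⋀_{(q,x)} R(q, x, {ω_M(q,x)}). Primeness is expressed by reachability of all states
and pairwise distinguishability of distinct states. -/
theorem stmt_6 {Q S I O : Type*}
    (δM : Q → I → Q) (ωM : Q → I → O) (q0 : Q)
    (δS : S → I → S) (ωS : S → I → O) (s0 : S)
    (hMreach : ∀ q : Q, ∃ π : List I, dAfter δM q0 π = q)
    (hMdist : ∀ q q' : Q, (∀ xs : List I, oOut δM ωM q xs = oOut δM ωM q' xs) → q = q')
    (hSreach : ∀ s : S, ∃ π : List I, dAfter δS s0 π = s)
    (hSdist : ∀ s s' : S, (∀ xs : List I, oOut δS ωS s xs = oOut δS ωS s' xs) → s = s') :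
    {p : List I × List O | p.2 = oOut δS ωS s0 p.1} =
      {p : List I × List O | p.2 = oOut δM ωM q0 p.1} ↔
    ∀ (q : Q) (x : I) (π : List I), dAfter δM q0 π = q →
      ωS (dAfter δS s0 π) x ∈ ({ωM q x} : Set O) :=
  stmt_6_general δM ωM q0 δS ωS s0
end

section
/- Let M be a completely specified deterministic prime FSM, R = R(q1,x1,Z1) ∧ … ∧ R(qk,xk,Zk) a composite requirement on M, and M1' the induced nondeterministic abstraction. Then for any completely specified DFSM S over the same alphabets: S ⊨ R if and only if L(S) ⊆ L(M1'). -/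
/-- Membership of an I/O-trace in the language of a state of an FSM. -/
def inLang {Q I O : Type*} (h : Q → I → O → Q → Prop) : Q → List (I × O) → Prop
  | _, [] => True
  | q, p :: τ => ∃ q', h q p.1 p.2 q' ∧ inLang h q' τ

/-- Admissible output set of the abstraction M1' at (q,x): Z_i at requirement pairs,
all of Σ_O elsewhere. -/
def reqOut {Q I O : Type*} {k : ℕ} (qr : Fin k → Q) (xr : Fin k → I)
    (Zr : Fin k → Set O) (q : Q) (x : I) : Set O :=
  {y | ∀ i, qr i = q → xr i = x → y ∈ Zr i}

/-- Transition relation of M1'. -/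
def m1'Rel {Q I O : Type*} (δ : Q → I → Q) (ω1 : Q → I → Set O)
    (q : Q) (x : I) (y : O) (q' : Q) : Prop :=
  q' = δ q x ∧ y ∈ ω1 q x

/-- Transition relation of a completely specified DFSM given by δ and ω. -/
def dfsmRel {Q I O : Type*} (δ : Q → I → Q) (ω : Q → I → O)
    (q : Q) (x : I) (y : O) (q' : Q) : Prop :=
  y = ω q x ∧ q' = δ q x

/- S and M1' read the same inputs and M1' moves like M, so after an input word π they sit in
s0-after-π and q0-after-π. Hence L(S) ⊆ L(M1') says exactly that every output of S after π on
any x is admissible for M1' at (q0-after-π, x), which is the requirement at the pairs (q_i, x_i)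
and no constraint elsewhere. -/

section LangSubset

variable {Q S I O : Type*} {δS : S → I → S} {ωS : S → I → O} {δ : Q → I → Q}
  {ω1 : Q → I → Set O}

theorem inLang_m1'Rel_of_forall_mem {s : S} {q : Q}
    (h : ∀ π x, ωS (dAfter δS s π) x ∈ ω1 (dAfter δ q π) x) (τ : List (I × O))
    (hτ : inLang (dfsmRel δS ωS) s τ) : inLang (m1'Rel δ ω1) q τ := by
  induction τ generalizing s q with
  | nil => trivial
  | cons p τ ih =>
    obtain ⟨_, ⟨hout, rfl⟩, hτ'⟩ := hτ
    exact ⟨δ q p.1, ⟨rfl, hout ▸ h [] p.1⟩, ih (fun π x => h (p.1 :: π) x) hτ'⟩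

theorem mem_of_inLang_dfsmRel_imp_m1'Rel {s : S} {q : Q}
    (h : ∀ τ, inLang (dfsmRel δS ωS) s τ → inLang (m1'Rel δ ω1) q τ) (π : List I) (x : I) :
    ωS (dAfter δS s π) x ∈ ω1 (dAfter δ q π) x := by
  induction π generalizing s q with
  | nil =>
    obtain ⟨_, ⟨_, hout⟩, _⟩ := h [(x, ωS s x)] ⟨δS s x, ⟨rfl, rfl⟩, trivial⟩
    exact hout
  | cons y π ih =>
    refine ih fun τ hτ => ?_
    obtain ⟨_, ⟨rfl, _⟩, hτ'⟩ := h ((y, ωS s y) :: τ) ⟨δS s y, ⟨rfl, rfl⟩, hτ⟩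
    exact hτ'

theorem inLang_dfsmRel_imp_m1'Rel_iff (s : S) (q : Q) :
    (∀ τ, inLang (dfsmRel δS ωS) s τ → inLang (m1'Rel δ ω1) q τ) ↔
      ∀ π x, ωS (dAfter δS s π) x ∈ ω1 (dAfter δ q π) x :=
  ⟨mem_of_inLang_dfsmRel_imp_m1'Rel, inLang_m1'Rel_of_forall_mem⟩

end LangSubset

theorem stmt_12_general {Q S I O : Type*}
    (δM : Q → I → Q) (q0 : Q)
    (k : ℕ) (qr : Fin k → Q) (xr : Fin k → I) (Zr : Fin k → Set O)
    (δS : S → I → S) (ωS : S → I → O) (s0 : S) :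
    (∀ (i : Fin k) (π : List I), dAfter δM q0 π = qr i →
        ωS (dAfter δS s0 π) (xr i) ∈ Zr i) ↔
    (∀ τ : List (I × O), inLang (dfsmRel δS ωS) s0 τ →
        inLang (m1'Rel δM (reqOut qr xr Zr)) q0 τ) := by
  rw [inLang_dfsmRel_imp_m1'Rel_iff]
  constructor
  · rintro hR π x i hq rfl
    exact hR i π hq.symm
  · intro hL i π hπ
    exact hL π (xr i) i hπ.symm rfl

/-- S ⊨ R ⟺ L(S) ⊆ L(M1'), for M a completely specified deterministic prime
FSM (primeness expressed as reachability plus distinguishability) with composite requirement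
R = ⋀ R(q_i,x_i,Z_i), and S a completely specified DFSM over the same alphabets. -/
theorem stmt_12 {Q S I O : Type*}
    (δM : Q → I → Q) (ωM : Q → I → O) (q0 : Q)
    (hMreach : ∀ q : Q, ∃ π : List I, dAfter δM q0 π = q)
    (hMdist : ∀ q q' : Q, (∀ xs : List I, oOut δM ωM q xs = oOut δM ωM q' xs) → q = q')
    (k : ℕ) (qr : Fin k → Q) (xr : Fin k → I) (Zr : Fin k → Set O)
    (hZ : ∀ i, ωM (qr i) (xr i) ∈ Zr i)
    (hWD : ∀ i j, qr i = qr j → xr i = xr j → Zr i = Zr j)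
    (δS : S → I → S) (ωS : S → I → O) (s0 : S) :
    (∀ (i : Fin k) (π : List I), dAfter δM q0 π = qr i →
        ωS (dAfter δS s0 π) (xr i) ∈ Zr i) ↔
    (∀ τ : List (I × O), inLang (dfsmRel δS ωS) s0 τ →
        inLang (m1'Rel δM (reqOut qr xr Zr)) q0 τ) :=
  stmt_12_general δM q0 k qr xr Zr δS ωS s0
end

section
/- Let M be a completely specified deterministic prime FSM with n ≥ 2 states and state cover V containing ε, and let R = ⋀_{i=1}^k R(q_i,x_i,Z_i) be a composite requirement on M. Let m ≥ n and let S be a minimal completely specified DFSM with at most m states over the same alphabets. Suppose TS ⊆ Σ_I* satisfies (1) V.⋃_{i=0}^{m−n+1} Σ_I^i ⊆ TS, and (2) for every pair (α,β) in A(M) ∪ B(M1) ∪ C(M1) there is γ ∈ Δ_M(α,β) with α.γ, β.γ ∈ TS. If ω_S(s0, x̄) = ω_M(q0, x̄) for all x̄ ∈ TS, then S ⊨ R. -/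
/-- Traces distinguishing q0-after-α from q0-after-β in the machine (δ, ω) (with outputs
in an arbitrary type, so this covers both M and its abstraction M1). -/
def distTraces {Q I O : Type*} (δ : Q → I → Q) (ω : Q → I → O) (q0 : Q)
    (α β : List I) : Set (List I) :=
  {γ | oOut δ ω (dAfter δ q0 α) γ ≠ oOut δ ω (dAfter δ q0 β) γ}

/-!
Pair every input trace `α` with its "product state" `κ α`: the state of `S` reached by `α`
together with the output function of the abstraction `M1` after `α`. Equality of product
states is a right congruence, so it suffices to show that every trace has the same product
state as a trace of `V.Σ_I^{≤ m-n}`; such a trace extended by `x_i` lies in `TS`, where `S`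
agrees with `M`, and `M`'s outputs satisfy `R`.

Every trace is shortened one input at a time. Given `v.w` with `v ∈ V` and `|w| = m - n + 1`,
the `n` states reached by `V` (pairwise distinct in `S` because `M` is prime and `TS`
contains distinguishing extensions for `A(M)`) and the `m - n + 1` nonempty prefixes of
`v.w` cannot all be distinct states of `S`. A collision is a pair in `B` or `C`; since `S`
passes `TS`, it cannot be separated in `M1`, so a suffix of `w` can be cut off.
-/

lemma dAfter_append {Q I : Type*} (δ : Q → I → Q) (q : Q) (a b : List I) :
    dAfter δ q (a ++ b) = dAfter δ (dAfter δ q a) b := by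
  induction a generalizing q with
  | nil => rfl
  | cons x xs ih => exact ih (δ q x)

lemma oOut_append {Q I O : Type*} (δ : Q → I → Q) (ω : Q → I → O) (q : Q) (a b : List I) :
    oOut δ ω q (a ++ b) = oOut δ ω q a ++ oOut δ ω (dAfter δ q a) b := by
  induction a generalizing q with
  | nil => rfl
  | cons x xs ih => simp only [List.cons_append, oOut, dAfter, ih]

lemma length_oOut {Q I O : Type*} (δ : Q → I → Q) (ω : Q → I → O) (q : Q) (a : List I) :
    (oOut δ ω q a).length = a.length := by
  induction a generalizing q with
  | nil => rfl
  | cons x xs ih => simp only [oOut, List.length_cons, ih]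

lemma oOut_dAfter_eq_of_oOut_append_eq {Q Q' I O : Type*} {δ : Q → I → Q} {ω : Q → I → O}
    {q : Q} {δ' : Q' → I → Q'} {ω' : Q' → I → O} {q' : Q'} {α γ : List I}
    (h : oOut δ ω q (α ++ γ) = oOut δ' ω' q' (α ++ γ)) :
    oOut δ ω (dAfter δ q α) γ = oOut δ' ω' (dAfter δ' q' α) γ := by
  rw [oOut_append, oOut_append] at h
  exact List.append_inj_right h (by rw [length_oOut, length_oOut])

lemma oOut_dAfter_congr {Q I O : Type*} {δ : Q → I → Q} {ω : Q → I → O} {q q' : Q}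
    (h : oOut δ ω q = oOut δ ω q') (w : List I) :
    oOut δ ω (dAfter δ q w) = oOut δ ω (dAfter δ q' w) :=
  funext fun γ => oOut_dAfter_eq_of_oOut_append_eq (congrFun h (w ++ γ))

lemma oOut_dAfter_eq_iff_distTraces_eq_empty {Q I O : Type*} {δ : Q → I → Q} {ω : Q → I → O}
    {q0 : Q} {α β : List I} :
    oOut δ ω (dAfter δ q0 α) = oOut δ ω (dAfter δ q0 β) ↔ distTraces δ ω q0 α β = ∅ := by
  simp only [funext_iff, distTraces, Set.eq_empty_iff_forall_notMem, Set.mem_ofPred_eq, not_not]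

lemma apply_mem_reqOut {Q I O : Type*} {k : ℕ} {ω : Q → I → O} {qr : Fin k → Q}
    {xr : Fin k → I} {Zr : Fin k → Set O} (hZ : ∀ i, ω (qr i) (xr i) ∈ Zr i) (q : Q) (x : I) :
    ω q x ∈ reqOut qr xr Zr q x := by
  rintro i rfl rfl
  exact hZ i

/-- An implementation `S` passing `TS` cannot merge two traces that some machine `N`
separates, as long as `TS` contains an extension of both separating them in `M`. -/
lemma oOut_eq_of_passes_of_dAfter_eq {Q Q' S I O O' : Type*} {δM : Q → I → Q} {ωM : Q → I → O}
    {q0 : Q} {δS : S → I → S} {ωS : S → I → O} {s0 : S} {TS : Set (List I)}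
    (hpass : ∀ xs ∈ TS, oOut δS ωS s0 xs = oOut δM ωM q0 xs)
    {δN : Q' → I → Q'} {ωN : Q' → I → O'} {qN : Q'} {α β : List I}
    (hsep : distTraces δN ωN qN α β ≠ ∅ →
      ∃ γ ∈ distTraces δM ωM q0 α β, α ++ γ ∈ TS ∧ β ++ γ ∈ TS)
    (hs : dAfter δS s0 α = dAfter δS s0 β) :
    oOut δN ωN (dAfter δN qN α) = oOut δN ωN (dAfter δN qN β) := by
  rw [oOut_dAfter_eq_iff_distTraces_eq_empty]
  by_contra hne
  obtain ⟨γ, hγ, hα, hβ⟩ := hsep hne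
  apply hγ
  rw [← oOut_dAfter_eq_of_oOut_append_eq (hpass _ hα), hs,
    oOut_dAfter_eq_of_oOut_append_eq (hpass _ hβ)]

/-- `V.⋃_{i=1}^{l} Σ_I^i`. -/
def extensions {I : Type*} (V : Set (List I)) (l : ℕ) : Set (List I) :=
  {β | ∃ v ∈ V, ∃ w : List I, β = v ++ w ∧ 1 ≤ w.length ∧ w.length ≤ l}

section ProductState

variable {Q S I O : Type*} (δS : S → I → S) (s0 : S) (δ : Q → I → Q) (ω : Q → I → O) (q0 : Q)

def prodState (α : List I) : S × (List I → List O) :=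
  (dAfter δS s0 α, oOut δ ω (dAfter δ q0 α))

local notation "κ" => prodState δS s0 δ ω q0

variable {δS s0 δ ω q0}

lemma prodState_append_eq {α β : List I} (h : κ α = κ β) (u : List I) :
    κ (α ++ u) = κ (β ++ u) := by
  simp only [prodState, Prod.ext_iff, dAfter_append] at h ⊢
  exact ⟨by rw [h.1], oOut_dAfter_congr h.2 u⟩

variable (δS s0 δ ω q0)

def HasShortRep (V : Set (List I)) (d : ℕ) (τ : List I) : Prop :=
  ∃ v ∈ V, ∃ w : List I, w.length ≤ d ∧ κ (v ++ w) = κ τ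

variable {δS s0 δ ω q0} {V : Set (List I)} {d : ℕ}

lemma HasShortRep.of_prodState_eq {τ τ' : List I} (h : HasShortRep δS s0 δ ω q0 V d τ)
    (h' : κ τ = κ τ') : HasShortRep δS s0 δ ω q0 V d τ' := by
  obtain ⟨v, hv, w, hw, hκ⟩ := h
  exact ⟨v, hv, w, hw, hκ.trans h'⟩

lemma hasShortRep_of_prodState_eq_take {v v' u w : List I} {i : ℕ} (hv' : v' ∈ V)
    (hw : w.length = d + 1) (hu : u.length < i) (hi : i ≤ w.length)
    (h : κ (v' ++ u) = κ (v ++ w.take i)) : HasShortRep δS s0 δ ω q0 V d (v ++ w) := by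
  refine ⟨v', hv', u ++ w.drop i, ?_, ?_⟩
  · rw [List.length_append, List.length_drop]
    omega
  · have h' := prodState_append_eq h (w.drop i)
    rwa [List.append_assoc, List.append_assoc, List.take_append_drop] at h'

variable [Fintype S] {ι : Type*} [Fintype ι]

lemma hasShortRep_of_length_eq_succ (hcard : Fintype.card S ≤ Fintype.card ι + d)
    (rep : ι → List I) (hrepV : ∀ i, rep i ∈ V)
    (hrepInj : Function.Injective fun i => dAfter δS s0 (rep i))
    (hB : ∀ α ∈ V, ∀ β ∈ extensions V (d + 1), dAfter δS s0 α = dAfter δS s0 β →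
      oOut δ ω (dAfter δ q0 α) = oOut δ ω (dAfter δ q0 β))
    (hC : ∀ α β, α <+: β → α ∈ extensions V (d + 1) → β ∈ extensions V (d + 1) →
      dAfter δS s0 α = dAfter δS s0 β → oOut δ ω (dAfter δ q0 α) = oOut δ ω (dAfter δ q0 β))
    {v w : List I} (hv : v ∈ V) (hw : w.length = d + 1) :
    HasShortRep δS s0 δ ω q0 V d (v ++ w) := by
  have hprefix : ∀ j : Fin (d + 1), v ++ w.take (j + 1) ∈ extensions V (d + 1) := fun j =>
    ⟨v, hv, _, rfl, by simp [hw], by simp [hw]⟩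
  have rep_collision : ∀ r (j : Fin (d + 1)),
      dAfter δS s0 (rep r) = dAfter δS s0 (v ++ w.take (j + 1)) →
      HasShortRep δS s0 δ ω q0 V d (v ++ w) := fun r j hs =>
    hasShortRep_of_prodState_eq_take (u := []) (i := j + 1) (hrepV r) hw (by simp) (by omega)
      (by rw [List.append_nil]; exact Prod.ext hs (hB _ (hrepV r) _ (hprefix j) hs))
  have prefix_collision : ∀ j j' : Fin (d + 1), j < j' →
      dAfter δS s0 (v ++ w.take (j + 1)) = dAfter δS s0 (v ++ w.take (j' + 1)) →
      HasShortRep δS s0 δ ω q0 V d (v ++ w) := fun j j' hjj' hs =>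
    hasShortRep_of_prodState_eq_take hv hw (by simp; omega) (by omega)
      (Prod.ext hs (hC _ _ ((List.prefix_append_right_inj v).2
        (List.take_prefix_take_left (by omega))) (hprefix j) (hprefix j') hs))
  have hlt : Fintype.card S < Fintype.card (ι ⊕ Fin (d + 1)) := by
    rw [Fintype.card_sum, Fintype.card_fin]
    omega
  obtain ⟨a, b, hab, hs⟩ := Fintype.exists_ne_map_eq_of_card_lt
    (Sum.elim (fun r => dAfter δS s0 (rep r)) fun j : Fin (d + 1) => dAfter δS s0 (v ++ w.take (j + 1))) hlt
  rcases a with r | j <;> rcases b with r' | j' <;> simp only [Sum.elim_inl, Sum.elim_inr] at hs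
  · exact absurd (congrArg Sum.inl (hrepInj hs)) hab
  · exact rep_collision r j' hs
  · exact rep_collision r' j hs.symm
  · rcases lt_trichotomy j j' with h | rfl | h
    · exact prefix_collision j j' h hs
    · exact absurd rfl hab
    · exact prefix_collision j' j h hs.symm

lemma hasShortRep_of_collisions (hε : [] ∈ V) (hcard : Fintype.card S ≤ Fintype.card ι + d)
    (rep : ι → List I) (hrepV : ∀ i, rep i ∈ V)
    (hrepInj : Function.Injective fun i => dAfter δS s0 (rep i))
    (hB : ∀ α ∈ V, ∀ β ∈ extensions V (d + 1), dAfter δS s0 α = dAfter δS s0 β →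
      oOut δ ω (dAfter δ q0 α) = oOut δ ω (dAfter δ q0 β))
    (hC : ∀ α β, α <+: β → α ∈ extensions V (d + 1) → β ∈ extensions V (d + 1) →
      dAfter δS s0 α = dAfter δS s0 β → oOut δ ω (dAfter δ q0 α) = oOut δ ω (dAfter δ q0 β))
    (τ : List I) : HasShortRep δS s0 δ ω q0 V d τ := by
  induction τ using List.reverseRecOn with
  | nil => exact ⟨[], hε, [], Nat.zero_le _, rfl⟩
  | append_singleton τ x ih =>
    obtain ⟨v, hv, w, hw, hκ⟩ := ih
    have hwx : HasShortRep δS s0 δ ω q0 V d (v ++ (w ++ [x])) := by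
      rcases Nat.lt_or_ge w.length d with hlt | hge
      · exact ⟨v, hv, w ++ [x], by simp; omega, rfl⟩
      · exact hasShortRep_of_length_eq_succ hcard rep hrepV hrepInj hB hC hv (by simp; omega)
    exact hwx.of_prodState_eq (by rw [← List.append_assoc]; exact prodState_append_eq hκ [x])

end ProductState

theorem stmt_13_general {Q S I O : Type*} [Fintype Q] [Fintype S]
    (δM : Q → I → Q) (ωM : Q → I → O) (q0 : Q)
    -- M is prime: all states reachable, distinct states distinguishable
    (hMdist : ∀ q q' : Q, (∀ xs : List I, oOut δM ωM q xs = oOut δM ωM q' xs) → q = q')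
    (m : ℕ)
    -- S is a minimal completely specified DFSM with at most m states
    (δS : S → I → S) (ωS : S → I → O) (s0 : S)
    (hScard : Fintype.card S ≤ m)
    -- V is a state cover of M containing the empty trace
    (V : Set (List I)) (hε : ([] : List I) ∈ V)
    (hcover : ∀ q : Q, ∃ v ∈ V, dAfter δM q0 v = q)
    -- the composite requirement R = ⋀_{i=1..k} R(q_i, x_i, Z_i)
    (k : ℕ) (qr : Fin k → Q) (xr : Fin k → I) (Zr : Fin k → Set O)
    (hZ : ∀ i, ωM (qr i) (xr i) ∈ Zr i)
    -- the test suite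
    (TS : Set (List I))
    -- condition (1): V.⋃_{i=0..m-n+1} Σ_I^i ⊆ TS
    (hTS1 : ∀ v ∈ V, ∀ w : List I,
      w.length ≤ m - Fintype.card Q + 1 → v ++ w ∈ TS)
    -- condition (2): distinguishing extensions for all pairs in A(M) ∪ B(M1) ∪ C(M1)
    (hTS2 : ∀ α β : List I,
      ((α ∈ V ∧ β ∈ V ∧ distTraces δM ωM q0 α β ≠ ∅) ∨
       (((α ∈ V ∧ ∃ v ∈ V, ∃ w : List I, β = v ++ w ∧
            1 ≤ w.length ∧ w.length ≤ m - Fintype.card Q + 1) ∨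
         (α <+: β ∧
          (∃ v ∈ V, ∃ w : List I, α = v ++ w ∧
            1 ≤ w.length ∧ w.length ≤ m - Fintype.card Q + 1) ∧
          (∃ v ∈ V, ∃ w : List I, β = v ++ w ∧
            1 ≤ w.length ∧ w.length ≤ m - Fintype.card Q + 1))) ∧
        distTraces δM (reqOut qr xr Zr) q0 α β ≠ ∅)) →
      ∃ γ ∈ distTraces δM ωM q0 α β, α ++ γ ∈ TS ∧ β ++ γ ∈ TS)
    -- S passes TS with the equality pass criterion
    (hpass : ∀ xs ∈ TS, oOut δS ωS s0 xs = oOut δM ωM q0 xs) :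
    -- then S satisfies the composite requirement R
    ∀ (i : Fin k) (π : List I), dAfter δM q0 π = qr i →
      ωS (dAfter δS s0 π) (xr i) ∈ Zr i := by
  choose rep hrepV hrepQ using hcover
  intro i π hπ
  have hrepInj : Function.Injective fun q => dAfter δS s0 (rep q) := fun q q' hs => by
    have h := oOut_eq_of_passes_of_dAfter_eq hpass
      (fun h => hTS2 _ _ (Or.inl ⟨hrepV q, hrepV q', h⟩)) hs
    rw [hrepQ, hrepQ] at h
    exact hMdist q q' (congrFun h)
  obtain ⟨v, hv, w, hw, hκ⟩ := hasShortRep_of_collisions (d := m - Fintype.card Q) hε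
    (by omega) rep hrepV hrepInj
    (fun α hα β hβ => oOut_eq_of_passes_of_dAfter_eq hpass
      (fun h => hTS2 α β (Or.inr ⟨Or.inl ⟨hα, hβ⟩, h⟩)))
    (fun α β hαβ hα hβ => oOut_eq_of_passes_of_dAfter_eq hpass
      (fun h => hTS2 α β (Or.inr ⟨Or.inr ⟨hαβ, hα, hβ⟩, h⟩))) π
  obtain ⟨hS, hM1⟩ := Prod.mk.inj hκ
  have hpass_x : ωS (dAfter δS s0 (v ++ w)) (xr i) = ωM (dAfter δM q0 (v ++ w)) (xr i) := by
    have h := oOut_dAfter_eq_of_oOut_append_eq (γ := [xr i]) (hpass _ (by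
      rw [List.append_assoc]
      exact hTS1 v hv _ (by simp; omega)))
    simpa only [oOut, List.cons.injEq, and_true] using h
  have hM1_x := congrFun hM1 [xr i]
  simp only [oOut, List.cons.injEq, and_true] at hM1_x
  have h := apply_mem_reqOut hZ (dAfter δM q0 (v ++ w)) (xr i)
  rw [hM1_x, hπ, ← hpass_x, hS] at h
  exact h i rfl rfl

/-- Theorem on exhaustive test suites: if the test suite TS contains
V.⋃_{i=0..m-n+1} Σ_I^i and distinguishing extensions for all pairs in
A(M) ∪ B(M1) ∪ C(M1), then passing TS (equality pass criterion) implies S ⊨ R. -/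
theorem stmt_13 {Q S I O : Type*} [Fintype Q] [Fintype S]
    (δM : Q → I → Q) (ωM : Q → I → O) (q0 : Q)
    -- M is prime: all states reachable, distinct states distinguishable
    (hMreach : ∀ q : Q, ∃ π : List I, dAfter δM q0 π = q)
    (hMdist : ∀ q q' : Q, (∀ xs : List I, oOut δM ωM q xs = oOut δM ωM q' xs) → q = q')
    (hn2 : 2 ≤ Fintype.card Q)
    (m : ℕ) (hmn : Fintype.card Q ≤ m)
    -- S is a minimal completely specified DFSM with at most m states
    (δS : S → I → S) (ωS : S → I → O) (s0 : S)
    (hSreach : ∀ s : S, ∃ π : List I, dAfter δS s0 π = s)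
    (hSdist : ∀ s s' : S, (∀ xs : List I, oOut δS ωS s xs = oOut δS ωS s' xs) → s = s')
    (hScard : Fintype.card S ≤ m)
    -- V is a state cover of M containing the empty trace
    (V : Set (List I)) (hε : ([] : List I) ∈ V)
    (hcover : ∀ q : Q, ∃ v ∈ V, dAfter δM q0 v = q)
    -- the composite requirement R = ⋀_{i=1..k} R(q_i, x_i, Z_i)
    (k : ℕ) (qr : Fin k → Q) (xr : Fin k → I) (Zr : Fin k → Set O)
    (hZ : ∀ i, ωM (qr i) (xr i) ∈ Zr i)
    (hWD : ∀ i j, qr i = qr j → xr i = xr j → Zr i = Zr j)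
    -- the test suite
    (TS : Set (List I))
    -- condition (1): V.⋃_{i=0..m-n+1} Σ_I^i ⊆ TS
    (hTS1 : ∀ v ∈ V, ∀ w : List I,
      w.length ≤ m - Fintype.card Q + 1 → v ++ w ∈ TS)
    -- condition (2): distinguishing extensions for all pairs in A(M) ∪ B(M1) ∪ C(M1)
    (hTS2 : ∀ α β : List I,
      ((α ∈ V ∧ β ∈ V ∧ distTraces δM ωM q0 α β ≠ ∅) ∨
       (((α ∈ V ∧ ∃ v ∈ V, ∃ w : List I, β = v ++ w ∧
            1 ≤ w.length ∧ w.length ≤ m - Fintype.card Q + 1) ∨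
         (α <+: β ∧
          (∃ v ∈ V, ∃ w : List I, α = v ++ w ∧
            1 ≤ w.length ∧ w.length ≤ m - Fintype.card Q + 1) ∧
          (∃ v ∈ V, ∃ w : List I, β = v ++ w ∧
            1 ≤ w.length ∧ w.length ≤ m - Fintype.card Q + 1))) ∧
        distTraces δM (reqOut qr xr Zr) q0 α β ≠ ∅)) →
      ∃ γ ∈ distTraces δM ωM q0 α β, α ++ γ ∈ TS ∧ β ++ γ ∈ TS)
    -- S passes TS with the equality pass criterion
    (hpass : ∀ xs ∈ TS, oOut δS ωS s0 xs = oOut δM ωM q0 xs) :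
    -- then S satisfies the composite requirement R
    ∀ (i : Fin k) (π : List I), dAfter δM q0 π = qr i →
      ωS (dAfter δS s0 π) (xr i) ∈ Zr i :=
  stmt_13_general δM ωM q0 hMdist m δS ωS s0 hScard V hε hcover k qr xr Zr hZ TS hTS1 hTS2 hpass
end

section
/- Let M1' be the nondeterministic requirement abstraction of M for composite requirement R = ⋀_{i=1}^k R(q_i,x_i,Z_i), and let Π̄ = ⋃_{i=1}^k Π(q_i).{x_i}. For a completely specified DFSM S and any single input sequence x̄, S passes x̄ against M1' (i.e., ω_S(s0,x̄) ∈ ω_{M1'}(q0,x̄)) if and only if S passes every trace in pref(x̄) ∩ Π̄ against M1'. -/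
/-- S passes input trace xs against M1': the output trace of S is pointwise contained in
the sequence of admissible output sets of M1' (i.e. ω_S(s0,xs) ∈ ω_{M1'}(q0,xs)). -/
def passes {Q S I O : Type*} {k : ℕ}
    (δM : Q → I → Q) (q0 : Q) (qr : Fin k → Q) (xr : Fin k → I) (Zr : Fin k → Set O)
    (δS : S → I → S) (ωS : S → I → O) (s0 : S) (xs : List I) : Prop :=
  List.Forall₂ (fun (y : O) (z : Set O) => y ∈ z)
    (oOut δS ωS s0 xs) (oOut δM (reqOut qr xr Zr) q0 xs)

/-! Passing `xs` means that at every step `π ++ [a]` of `xs` the output of `S` lies in the admissible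
set of `M1'` at `(q0-after-π, a)`. That set is all of `Σ_O` unless `(q0-after-π, a)` is a requirement
pair `(qr i, xr i)`, and then `π ++ [a]` lies in `Π̄`, so the step is checked by passing that prefix. -/

section Passes

variable {Q S I O : Type*} {k : ℕ} {δM : Q → I → Q} {qr : Fin k → Q} {xr : Fin k → I}
  {Zr : Fin k → Set O} {δS : S → I → S} {ωS : S → I → O}

theorem passes_nil (q : Q) (s : S) : passes δM q qr xr Zr δS ωS s [] :=
  List.Forall₂.nil

theorem passes_cons {q : Q} {s : S} {x : I} {xs : List I} :
    passes δM q qr xr Zr δS ωS s (x :: xs) ↔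
      ωS s x ∈ reqOut qr xr Zr q x ∧ passes δM (δM q x) qr xr Zr δS ωS (δS s x) xs := by
  simp only [passes, oOut, List.forall₂_cons]

theorem passes_iff_forall_prefix {q : Q} {s : S} {xs : List I} :
    passes δM q qr xr Zr δS ωS s xs ↔
      ∀ π a, π ++ [a] <+: xs → ωS (dAfter δS s π) a ∈ reqOut qr xr Zr (dAfter δM q π) a := by
  induction xs generalizing q s with
  | nil => simp [passes_nil]
  | cons x xs ih =>
    rw [passes_cons, ih]
    constructor
    · rintro ⟨hx, hxs⟩ (_ | ⟨y, π⟩) a hpre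
      · obtain rfl : a = x := by simpa using hpre
        exact hx
      · rw [List.cons_append, List.cons_prefix_cons] at hpre
        obtain ⟨rfl, hpre⟩ := hpre
        exact hxs π a hpre
    · intro h
      exact ⟨h [] x (by simp), fun π a hpre => h (x :: π) a (by simpa using hpre)⟩

theorem passes_of_prefix {q : Q} {s : S} {w xs : List I} (hw : w <+: xs)
    (h : passes δM q qr xr Zr δS ωS s xs) : passes δM q qr xr Zr δS ωS s w := by
  rw [passes_iff_forall_prefix] at h ⊢
  exact fun π a hpre => h π a (hpre.trans hw)

end Passes

theorem stmt_14_general {Q S I O : Type*}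
    (δM : Q → I → Q) (q0 : Q)
    (k : ℕ) (qr : Fin k → Q) (xr : Fin k → I) (Zr : Fin k → Set O)
    (δS : S → I → S) (ωS : S → I → O) (s0 : S)
    (xs : List I) :
    passes δM q0 qr xr Zr δS ωS s0 xs ↔
    (∀ w : List I, w ≠ [] → w <+: xs →
      (∃ (i : Fin k) (π : List I), dAfter δM q0 π = qr i ∧ w = π ++ [xr i]) →
      passes δM q0 qr xr Zr δS ωS s0 w) := by
  constructor
  · exact fun h w _ hw _ => passes_of_prefix hw h
  · intro h
    rw [passes_iff_forall_prefix]
    rintro π a hpre i hq rfl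
    have hpass := h (π ++ [xr i]) (by simp) hpre ⟨i, π, hq.symm, rfl⟩
    exact passes_iff_forall_prefix.mp hpass π (xr i) (List.prefix_refl _) i hq rfl

/-- S passes a single input sequence xs against M1' iff S passes every
nonempty prefix of xs lying in Π̄ = ⋃_i Π(q_i).{x_i}. -/
theorem stmt_14 {Q S I O : Type*}
    (δM : Q → I → Q) (ωM : Q → I → O) (q0 : Q)
    (k : ℕ) (qr : Fin k → Q) (xr : Fin k → I) (Zr : Fin k → Set O)
    (hZ : ∀ i, ωM (qr i) (xr i) ∈ Zr i)
    (δS : S → I → S) (ωS : S → I → O) (s0 : S)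
    (xs : List I) :
    passes δM q0 qr xr Zr δS ωS s0 xs ↔
    (∀ w : List I, w ≠ [] → w <+: xs →
      (∃ (i : Fin k) (π : List I), dAfter δM q0 π = qr i ∧ w = π ++ [xr i]) →
      passes δM q0 qr xr Zr δS ωS s0 w) :=
  stmt_14_general δM q0 k qr xr Zr δS ωS s0 xs
end
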